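/- Let G' be obtained from a connected graph G by replacing every edge uv with two new adjacent-to-both vertices x1_uv, x2_uv (edges u x1_uv, u x2_uv, v x1_uv, v x2_uv, with uv removed). Let N be the set of all new intermediate vertices and let F consist of all pairs of intermediate vertices that share a common neighbour in V(G). Then G' + F is K_{1,3}-free. -/
import Mathlib


open SimpleGraph

/-- `G` has no induced claw `K_{1,3}`. -/
def ClawFree {V : Type*} (G : SimpleGraph V) : Prop :=
  ¬∃ z a b c : V, G.Adj z a ∧ G.Adj z b ∧ G.Adj z c ∧
    ¬G.Adj a b ∧ ¬G.Adj a c ∧ ¬G.Adj b c ∧ a ≠ b ∧ a ≠ c ∧ b ≠ c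

/-- The graph `G' + F`: `G'` is obtained from `G` by replacing every edge `uv` with two
new intermediate vertices adjacent to both `u` and `v` (deleting `uv`), and `F` consists
of all edges between intermediate vertices that share a common neighbour in `V(G)`. -/
def MoshiPlus {V : Type*} (G : SimpleGraph V) :
    SimpleGraph (V ⊕ ({e : Sym2 V // e ∈ G.edgeSet} × Fin 2)) :=
  SimpleGraph.fromRel (fun a b =>
    match a, b with
    | Sum.inl u, Sum.inr (e, _) => u ∈ (e : Sym2 V)
    | Sum.inr (e, _), Sum.inr (f, _) => ∃ u : V, u ∈ (e : Sym2 V) ∧ u ∈ (f : Sym2 V)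
    | _, _ => False)

/-- A vertex of `MoshiPlus G` "touches" `w : V` if it equals `inl w` or is an
intermediate vertex whose edge contains `w`. -/
def Touch {V : Type*} (G : SimpleGraph V)
    (a : V ⊕ ({e : Sym2 V // e ∈ G.edgeSet} × Fin 2)) (w : V) : Prop :=
  a = Sum.inl w ∨ ∃ p : {e : Sym2 V // e ∈ G.edgeSet} × Fin 2,
    a = Sum.inr p ∧ w ∈ (p.1 : Sym2 V)

lemma adj_of_touch {V : Type*} (G : SimpleGraph V)
    {a b : V ⊕ ({e : Sym2 V // e ∈ G.edgeSet} × Fin 2)} {w : V}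
    (hne : a ≠ b) (ha : Touch G a w) (hb : Touch G b w) : (MoshiPlus G).Adj a b := by
  rw [MoshiPlus, SimpleGraph.fromRel_adj]
  refine ⟨hne, ?_⟩
  rcases ha with rfl | ⟨⟨f, i⟩, rfl, hf⟩ <;> rcases hb with rfl | ⟨⟨g, j⟩, rfl, hg⟩
  · exact absurd rfl hne
  · exact Or.inl hg
  · exact Or.inr hf
  · exact Or.inl ⟨w, hf, hg⟩

lemma touch_of_adj {V : Type*} (G : SimpleGraph V)
    {e : {e : Sym2 V // e ∈ G.edgeSet}} {i : Fin 2}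
    {x : V ⊕ ({e : Sym2 V // e ∈ G.edgeSet} × Fin 2)}
    (h : (MoshiPlus G).Adj (Sum.inr (e, i)) x) :
    ∃ w, w ∈ (e : Sym2 V) ∧ Touch G x w := by
  rw [MoshiPlus, SimpleGraph.fromRel_adj] at h
  obtain ⟨hne, h | h⟩ := h <;> rcases x with u | ⟨f, j⟩
  · exact absurd h id
  · obtain ⟨w, hw, hwf⟩ := h
    exact ⟨w, hw, Or.inr ⟨⟨f, j⟩, rfl, hwf⟩⟩
  · exact ⟨u, h, Or.inl rfl⟩
  · obtain ⟨w, hwf, hw⟩ := h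
    exact ⟨w, hw, Or.inr ⟨⟨f, j⟩, rfl, hwf⟩⟩

theorem stmt8 {V : Type*} [Fintype V] (G : SimpleGraph V) (hG : G.Connected) :
    ClawFree (MoshiPlus G) := by
  rintro ⟨z, a, b, c, hza, hzb, hzc, hab, hac, hbc, hab', hac', hbc'⟩
  rcases z with u | ⟨⟨e, he⟩, i⟩
  · -- center is an original vertex: all neighbors are intermediate and touch `u`
    have key : ∀ x, (MoshiPlus G).Adj (Sum.inl u) x → Touch G x u := by
      intro x hx
      rw [MoshiPlus, SimpleGraph.fromRel_adj] at hx
      obtain ⟨hne, h | h⟩ := hx <;> rcases x with v | ⟨f, j⟩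
      · exact absurd h id
      · exact Or.inr ⟨⟨f, j⟩, rfl, h⟩
      · exact absurd h id
      · exact absurd h id
    exact hab (adj_of_touch G hab' (key a hza) (key b hzb))
  · -- center is intermediate; its edge is `s(u,v)`
    induction e using Sym2.ind with
    | _ u v =>
      obtain ⟨wa, hwa, ta⟩ := touch_of_adj G hza
      obtain ⟨wb, hwb, tb⟩ := touch_of_adj G hzb
      obtain ⟨wc, hwc, tc⟩ := touch_of_adj G hzc
      rw [Sym2.mem_iff] at hwa hwb hwc
      rcases hwa with rfl | rfl <;> rcases hwb with rfl | rfl <;> rcases hwc with rfl | rfl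
      · exact hab (adj_of_touch G hab' ta tb)
      · exact hab (adj_of_touch G hab' ta tb)
      · exact hac (adj_of_touch G hac' ta tc)
      · exact hbc (adj_of_touch G hbc' tb tc)
      · exact hbc (adj_of_touch G hbc' tb tc)
      · exact hac (adj_of_touch G hac' ta tc)
      · exact hab (adj_of_touch G hab' ta tb)
      · exact hab (adj_of_touch G hab' ta tb)
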